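/- arXiv:2406.08658 — 5 statements merged into one kernel-verified Lean document; each statement's English description precedes it below -/
import Mathlib

section
/- Let q ∈ (0,2) and v ∈ ℝ^d. Let v|_{top(M)} denote the vector obtained from v by keeping its M largest entries in absolute value and setting all other entries to 0. Then for every M = 1, …, d, ‖v − v|_{top(M)}‖₂ ≤ ((1 − q/2)^{(2−q)/q} · (q/2))^{1/2} · ‖v‖_q · M^{−1/q + 1/2}. -/
open Finset

/-- If `J` is a set of `M` largest-magnitude entries of `v` and `q ∈ (0,2)`, then
`‖v − v|_{top(M)}‖₂ ≤ ((1 − q/2)^((2−q)/q) (q/2))^{1/2} ‖v‖_q M^{−1/q + 1/2}`. -/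
theorem stmt2 (d M : ℕ) (hM1 : 1 ≤ M) (hMd : M ≤ d) (q : ℝ) (hq0 : 0 < q) (hq2 : q < 2)
    (v : Fin d → ℝ) (J : Finset (Fin d)) (hJ : J.card = M)
    (htop : ∀ i ∈ J, ∀ j ∉ J, |v j| ≤ |v i|) :
    Real.sqrt (∑ i ∈ Jᶜ, (v i) ^ 2) ≤
      Real.sqrt ((1 - q / 2) ^ ((2 - q) / q) * (q / 2)) *
        (∑ i, |v i| ^ q) ^ (1 / q) * (M : ℝ) ^ (-1 / q + 1 / 2) := by
  have hq2' : (0:ℝ) < 2 - q := by linarith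
  set α : ℝ := (2 - q) / q with hα
  have hα0 : 0 < α := div_pos hq2' hq0
  have hMpos : (0:ℝ) < M := by exact_mod_cast Nat.lt_of_lt_of_le Nat.zero_lt_one hM1
  have hJne : J.Nonempty := Finset.card_pos.mp (by omega)
  obtain ⟨j0, hj0J, hj0min⟩ := J.exists_min_image (fun j => |v j|) hJne
  set t : ℝ := |v j0| with htdef
  have ht0 : 0 ≤ t := abs_nonneg _
  set a : ℝ := ∑ i ∈ J, |v i| ^ q with hadef
  set b : ℝ := ∑ i ∈ Jᶜ, |v i| ^ q with hbdef
  have ha0 : 0 ≤ a := Finset.sum_nonneg fun i _ => Real.rpow_nonneg (abs_nonneg _) q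
  have hb0 : 0 ≤ b := Finset.sum_nonneg fun i _ => Real.rpow_nonneg (abs_nonneg _) q
  have hS : a + b = ∑ i, |v i| ^ q := Finset.sum_add_sum_compl J _
  set S : ℝ := ∑ i, |v i| ^ q with hSdef
  have hS0 : 0 ≤ S := by rw [← hS]; positivity
  -- step 1 : tail ≤ t^(2-q) * b
  have h1 : ∑ i ∈ Jᶜ, (v i) ^ 2 ≤ t ^ ((2:ℝ) - q) * b := by
    rw [hbdef, Finset.mul_sum]
    refine Finset.sum_le_sum fun i hi => ?_
    have hvi : |v i| ≤ t := htop j0 hj0J i (Finset.mem_compl.mp hi)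
    calc (v i) ^ 2 = |v i| ^ (2:ℕ) := (sq_abs _).symm
      _ = |v i| ^ ((2:ℕ) : ℝ) := (Real.rpow_natCast _ 2).symm
      _ = |v i| ^ (((2:ℝ) - q) + q) := by norm_num
      _ = |v i| ^ ((2:ℝ) - q) * |v i| ^ q := by
          rw [Real.rpow_add' (abs_nonneg _) (by norm_num)]
      _ ≤ t ^ ((2:ℝ) - q) * |v i| ^ q :=
          mul_le_mul_of_nonneg_right (Real.rpow_le_rpow (abs_nonneg _) hvi hq2'.le)
            (Real.rpow_nonneg (abs_nonneg _) q)
  -- step 2 : M * t^q ≤ a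
  have h2 : (M:ℝ) * t ^ q ≤ a := by
    have := Finset.sum_le_sum (fun j hj => Real.rpow_le_rpow ht0 (hj0min j hj) hq0.le)
    simpa [Finset.sum_const, hJ, nsmul_eq_mul] using this
  have h4 : t ^ q ≤ a / M := (le_div_iff₀ hMpos).mpr (by linarith [h2])
  have h3 : t ^ ((2:ℝ) - q) = (t ^ q) ^ α := by
    rw [← Real.rpow_mul ht0]
    congr 1
    rw [hα]; field_simp
  have h5 : (t ^ q) ^ α ≤ (a / M) ^ α :=
    Real.rpow_le_rpow (Real.rpow_nonneg ht0 q) h4 hα0.le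
  -- AM-GM
  set w1 : ℝ := 1 - q / 2 with hw1def
  set w2 : ℝ := q / 2 with hw2def
  have hw1 : (0:ℝ) < w1 := by rw [hw1def]; linarith
  have hw2 : (0:ℝ) < w2 := by rw [hw2def]; linarith
  have hgm := Real.geom_mean_le_arith_mean2_weighted hw1.le hw2.le
    (div_nonneg ha0 hw1.le) (div_nonneg hb0 hw2.le) (by rw [hw1def, hw2def]; ring)
  have hgm' : (a / w1) ^ w1 * (b / w2) ^ w2 ≤ a + b := by
    calc (a / w1) ^ w1 * (b / w2) ^ w2 ≤ w1 * (a / w1) + w2 * (b / w2) := hgm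
      _ = a + b := by
          rw [mul_comm w1, mul_comm w2, div_mul_cancel₀ a hw1.ne', div_mul_cancel₀ b hw2.ne']
  have h7 : (a / w1) ^ α * (b / w2) ≤ (a + b) ^ (2 / q) := by
    have := Real.rpow_le_rpow (by positivity) hgm' (by positivity : (0:ℝ) ≤ 2 / q)
    rwa [Real.mul_rpow (Real.rpow_nonneg (by positivity) _) (Real.rpow_nonneg (by positivity) _),
      ← Real.rpow_mul (by positivity), ← Real.rpow_mul (by positivity),
      show w1 * (2 / q) = α by rw [hw1def, hα]; field_simp; ring,
      show w2 * (2 / q) = 1 by rw [hw2def]; field_simp,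
      Real.rpow_one] at this
  have hkey : a ^ α * b ≤ w1 ^ α * w2 * (a + b) ^ (2 / q) := by
    have hw1α : (0:ℝ) < w1 ^ α := Real.rpow_pos_of_pos hw1 α
    have h8 := mul_le_mul_of_nonneg_left h7 (by positivity : (0:ℝ) ≤ w1 ^ α * w2)
    calc a ^ α * b = w1 ^ α * w2 * ((a / w1) ^ α * (b / w2)) := by
          rw [Real.div_rpow ha0 hw1.le]; field_simp
      _ ≤ w1 ^ α * w2 * (a + b) ^ (2 / q) := h8
  -- combine
  have htail : ∑ i ∈ Jᶜ, (v i) ^ 2 ≤ w1 ^ α * w2 * S ^ (2 / q) * (M:ℝ) ^ (-α) := by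
    calc ∑ i ∈ Jᶜ, (v i) ^ 2 ≤ t ^ ((2:ℝ) - q) * b := h1
      _ ≤ (a / M) ^ α * b := by
          exact mul_le_mul_of_nonneg_right (h3 ▸ h5) hb0
      _ = a ^ α * b / (M:ℝ) ^ α := by
          rw [Real.div_rpow ha0 hMpos.le]; ring
      _ ≤ w1 ^ α * w2 * (a + b) ^ (2 / q) / (M:ℝ) ^ α := by gcongr
      _ = w1 ^ α * w2 * S ^ (2 / q) * (M:ℝ) ^ (-α) := by
          rw [hS, Real.rpow_neg hMpos.le]; ring
  -- conclude via sqrt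
  have hC0 : 0 ≤ w1 ^ α * w2 := by positivity
  have hRHS2 : (Real.sqrt (w1 ^ α * w2) * S ^ (1 / q) * (M:ℝ) ^ (-1 / q + 1 / 2)) ^ 2
      = w1 ^ α * w2 * S ^ (2 / q) * (M:ℝ) ^ (-α) := by
    rw [mul_pow, mul_pow, Real.sq_sqrt hC0,
      ← Real.rpow_natCast (S ^ (1/q)) 2, ← Real.rpow_natCast ((M:ℝ) ^ _) 2,
      ← Real.rpow_mul hS0, ← Real.rpow_mul hMpos.le]
    congr 1
    · congr 1
      push_cast; ring
    · congr 1
      push_cast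
      rw [hα]; field_simp; ring
  have hfin : Real.sqrt (∑ i ∈ Jᶜ, (v i) ^ 2)
      ≤ Real.sqrt ((Real.sqrt (w1 ^ α * w2) * S ^ (1 / q) * (M:ℝ) ^ (-1 / q + 1 / 2)) ^ 2) := by
    apply Real.sqrt_le_sqrt
    rw [hRHS2]; exact htail
  rwa [Real.sqrt_sq (by positivity)] at hfin
end

section
/- Let u, v ∈ ℝ^d, let q ∈ (0,2], let I_u be the index set of the M largest-magnitude entries of u, let I_v be the index set of the M largest-magnitude entries of v, and let u|_{top(M)} (resp. v|_{top(M)}) be u (resp. v) with all entries outside I_u (resp. I_v) set to 0. Then (4^{max(q−1,0)} + 1) · Σ_{i ∈ I_u ∪ I_v} |u_i − v_i|^q ≥ ‖u|_{top(M)} − v‖_q^q − 4^{max(q−1,0)} · ‖v − v|_{top(M)}‖_q^q. -/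
/-!
Write `C = 4 ^ max (q - 1) 0`, the constant of the quasi-triangle inequality
`(a + b + c) ^ q ≤ C (a ^ q + b ^ q + c ^ q)`. Outside `Iu ∪ Iv` both sides of the inequality
only see `|v i| ^ q`, and `C ≥ 1` lets the subtracted tail absorb these terms. What remains is to
bound `|v i| ^ q` for the indices `i ∈ Iv \ Iu` that the pruning of `u` discards. Since
`Iv \ Iu` and `Iu \ Iv` have the same size, pair each such `i` with some `j ∈ Iu \ Iv`: as `u j`
is kept and `u i` is not, `|u i| ≤ |u j|`, so
`|v i| ≤ |u i - v i| + |u j - v j| + |v j|`, and `|v j| ^ q` is paid for by the tail of `v`.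
-/

open Finset

namespace Real

theorem rpow_add_le_two_rpow_mul_rpow_add_rpow {a b q : ℝ} (ha : 0 ≤ a) (hb : 0 ≤ b)
    (hq : 0 ≤ q) : (a + b) ^ q ≤ (2 : ℝ) ^ max (q - 1) 0 * (a ^ q + b ^ q) := by
  rcases le_total q 1 with hq1 | hq1
  · rw [max_eq_right (by linarith), rpow_zero, one_mul]
    exact rpow_add_le_add_rpow ha hb hq hq1
  · rw [max_eq_left (by linarith)]
    lift a to NNReal using ha
    lift b to NNReal using hb
    exact_mod_cast NNReal.rpow_add_le_mul_rpow_add_rpow a b hq1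

theorem rpow_add_add_le_four_rpow_mul {a b c q : ℝ} (ha : 0 ≤ a) (hb : 0 ≤ b) (hc : 0 ≤ c)
    (hq : 0 ≤ q) :
    (a + b + c) ^ q ≤ (4 : ℝ) ^ max (q - 1) 0 * (a ^ q + b ^ q + c ^ q) := by
  set K := (2 : ℝ) ^ max (q - 1) 0
  have hK : 1 ≤ K := one_le_rpow (by norm_num) (le_max_right _ _)
  have hfour : (4 : ℝ) ^ max (q - 1) 0 = K * K := by
    rw [← mul_rpow (by norm_num) (by norm_num)]
    norm_num
  calc (a + b + c) ^ q = (a + (b + c)) ^ q := by rw [add_assoc]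
    _ ≤ K * (a ^ q + (b + c) ^ q) := rpow_add_le_two_rpow_mul_rpow_add_rpow ha (by positivity) hq
    _ ≤ K * (K * a ^ q + K * (b ^ q + c ^ q)) := by
      gcongr
      exacts [le_mul_of_one_le_left (rpow_nonneg ha q) hK,
        rpow_add_le_two_rpow_mul_rpow_add_rpow hb hc hq]
    _ = (4 : ℝ) ^ max (q - 1) 0 * (a ^ q + b ^ q + c ^ q) := by rw [hfour]; ring

end Real

theorem rpow_abs_le_of_abs_le_abs {q : ℝ} (hq : 0 ≤ q) {a b c d : ℝ} (h : |a| ≤ |c|) :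
    |b| ^ q ≤ (4 : ℝ) ^ max (q - 1) 0 * |a - b| ^ q
      + (4 : ℝ) ^ max (q - 1) 0 * (|c - d| ^ q + |d| ^ q) := by
  have hb : |b| ≤ |a - b| + |c - d| + |d| := by
    have := abs_sub_abs_le_abs_sub b a
    have := abs_sub_abs_le_abs_sub c d
    rw [abs_sub_comm b a] at *
    linarith
  calc |b| ^ q ≤ (|a - b| + |c - d| + |d|) ^ q := by gcongr
    _ ≤ (4 : ℝ) ^ max (q - 1) 0 * (|a - b| ^ q + |c - d| ^ q + |d| ^ q) :=
      Real.rpow_add_add_le_four_rpow_mul (abs_nonneg _) (abs_nonneg _) (abs_nonneg _) hq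
    _ = _ := by ring

namespace Finset

variable {ι M : Type*}

theorem sum_le_sum_add_sum_of_card_eq [AddCommMonoid M] [PartialOrder M] [IsOrderedAddMonoid M]
    {s t : Finset ι} (hst : #s = #t) {f g h : ι → M}
    (hfgh : ∀ i ∈ s, ∀ j ∈ t, f i ≤ g i + h j) :
    ∑ i ∈ s, f i ≤ ∑ i ∈ s, g i + ∑ j ∈ t, h j := by
  let e : s ≃ t := s.equivOfCardEq hst
  calc ∑ i ∈ s, f i = ∑ i : s, f i := (sum_coe_sort s f).symm
    _ ≤ ∑ i : s, (g i + h (e i)) := sum_le_sum fun i _ => hfgh i i.2 (e i) (e i).2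
    _ = ∑ i ∈ s, g i + ∑ j ∈ t, h j := by
      rw [sum_add_distrib, sum_coe_sort s g, e.sum_comp (fun j : t => h j), sum_coe_sort t h]

theorem sum_compl_eq_sum_sdiff_add_sum_compl_union [Fintype ι] [DecidableEq ι]
    [AddCommMonoid M] (s t : Finset ι) (f : ι → M) :
    ∑ i ∈ sᶜ, f i = ∑ i ∈ t \ s, f i + ∑ i ∈ (s ∪ t)ᶜ, f i := by
  rw [← sum_inter_add_sum_sdiff sᶜ t f, compl_union, sdiff_eq_inter_compl, sdiff_eq_inter_compl,
    inter_comm]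

end Finset

section Pruning

variable {ι : Type*} [Fintype ι] [DecidableEq ι]

theorem sum_abs_ite_sub_rpow (s : Finset ι) (u v : ι → ℝ) (q : ℝ) :
    ∑ i, |(if i ∈ s then u i else 0) - v i| ^ q
      = ∑ i ∈ s, |u i - v i| ^ q + ∑ i ∈ sᶜ, |v i| ^ q := by
  rw [← sum_add_sum_compl s]
  congr 1 <;> refine sum_congr rfl fun i hi => ?_ <;> simp_all

theorem sum_abs_sub_ite_rpow (s : Finset ι) (v : ι → ℝ) {q : ℝ} (hq : q ≠ 0) :
    ∑ i, |v i - (if i ∈ s then v i else 0)| ^ q = ∑ i ∈ sᶜ, |v i| ^ q := by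
  rw [← sum_add_sum_compl s, sum_eq_zero fun i hi => by simp [hi, Real.zero_rpow hq], zero_add]
  exact sum_congr rfl fun i hi => by simp_all

end Pruning

theorem stmt3_general (d M : ℕ) (q : ℝ) (hq0 : 0 < q)
    (u v : Fin d → ℝ) (Iu Iv : Finset (Fin d)) (hIu : Iu.card = M) (hIv : Iv.card = M)
    (htopu : ∀ i ∈ Iu, ∀ j ∉ Iu, |u j| ≤ |u i|) :
    (∑ i, |(if i ∈ Iu then u i else 0) - v i| ^ q)
        - (4 : ℝ) ^ (max (q - 1) 0) * ∑ i, |v i - (if i ∈ Iv then v i else 0)| ^ q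
      ≤ ((4 : ℝ) ^ (max (q - 1) 0) + 1) * ∑ i ∈ Iu ∪ Iv, |u i - v i| ^ q := by
  set C := (4 : ℝ) ^ (max (q - 1) 0)
  have hC : 1 ≤ C := Real.one_le_rpow (by norm_num) (le_max_right _ _)
  have hpair : ∑ i ∈ Iv \ Iu, |v i| ^ q ≤ C * ∑ i ∈ Iv \ Iu, |u i - v i| ^ q
      + C * (∑ j ∈ Iu \ Iv, |u j - v j| ^ q + ∑ j ∈ Iu \ Iv, |v j| ^ q) := by
    rw [mul_sum, ← sum_add_distrib, mul_sum]
    exact sum_le_sum_add_sum_of_card_eq (card_sdiff_comm (hIv.trans hIu.symm))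
      fun i hi j hj =>
        rpow_abs_le_of_abs_le_abs hq0.le (htopu j (mem_sdiff.1 hj).1 i (mem_sdiff.1 hi).2)
  have hsplit : ∑ i ∈ Iv \ Iu, |u i - v i| ^ q + ∑ i ∈ Iu, |u i - v i| ^ q
      = ∑ i ∈ Iu ∪ Iv, |u i - v i| ^ q := by
    rw [← union_sdiff_left, sum_sdiff subset_union_left]
  have hsdiff : ∑ i ∈ Iu \ Iv, |u i - v i| ^ q ≤ ∑ i ∈ Iu, |u i - v i| ^ q :=
    sum_le_sum_of_subset_of_nonneg sdiff_subset fun i _ _ => by positivity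
  have hnonneg : 0 ≤ ∑ i ∈ Iv \ Iu, |u i - v i| ^ q := sum_nonneg fun i _ => by positivity
  have htail : 0 ≤ ∑ i ∈ (Iu ∪ Iv)ᶜ, |v i| ^ q := sum_nonneg fun i _ => by positivity
  rw [sum_abs_ite_sub_rpow, sum_abs_sub_ite_rpow _ _ hq0.ne',
    sum_compl_eq_sum_sdiff_add_sum_compl_union Iu Iv,
    sum_compl_eq_sum_sdiff_add_sum_compl_union Iv Iu, union_comm Iv Iu]
  nlinarith [mul_le_mul_of_nonneg_left hsdiff (by linarith : (0 : ℝ) ≤ C),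
    mul_nonneg (sub_nonneg.2 hC) htail]

/-- Magnitude pruning lemma: if `Iu`, `Iv` are index sets of the `M` largest-magnitude
entries of `u` and `v` respectively, then for `q ∈ (0,2]`,
`(4^{max(q−1,0)} + 1) Σ_{i ∈ Iu ∪ Iv} |u_i − v_i|^q
  ≥ ‖u|_{top(M)} − v‖_q^q − 4^{max(q−1,0)} ‖v − v|_{top(M)}‖_q^q`. -/
theorem stmt3 (d M : ℕ) (q : ℝ) (hq0 : 0 < q) (hq2 : q ≤ 2)
    (u v : Fin d → ℝ) (Iu Iv : Finset (Fin d)) (hIu : Iu.card = M) (hIv : Iv.card = M)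
    (htopu : ∀ i ∈ Iu, ∀ j ∉ Iu, |u j| ≤ |u i|)
    (htopv : ∀ i ∈ Iv, ∀ j ∉ Iv, |v j| ≤ |v i|) :
    (∑ i, |(if i ∈ Iu then u i else 0) - v i| ^ q)
        - (4 : ℝ) ^ (max (q - 1) 0) * ∑ i, |v i - (if i ∈ Iv then v i else 0)| ^ q
      ≤ ((4 : ℝ) ^ (max (q - 1) 0) + 1) * ∑ i ∈ Iu ∪ Iv, |u i - v i| ^ q :=
  stmt3_general d M q hq0 u v Iu Iv hIu hIv htopu
end

section
/- Fix M ∈ {1,…,d}, let φ be the ReLU activation φ(t) = max(t,0), and let F_M be the class of boolean-valued functions x ↦ φ'(⟨w,x⟩ + b) = 1_{⟨w,x⟩ + b > 0} indexed by unit vectors w ∈ ℝ^d with ‖w‖₀ ≤ M and b ∈ ℝ. Then the VC dimension d* of F_M satisfies M ≤ d* ≤ 6 M log(e d / M). -/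
/-!
For the lower bound, the standard basis vectors `e_i`, `i ∈ T` with `#T = M`, are shattered: the
classifier with `w = ± M^{-1/2}` on `T` and `b = 0` picks out any prescribed subset.

For the upper bound, every classifier of the class only looks at the coordinates in some `M`-set
`S`, and by Radon's theorem affine half-spaces of `ℝ^S` shatter at most `M + 1` points. By the
Sauer–Shelah lemma each of these `C(d, M)` subclasses has at most
`∑_{k ≤ M+1} C(n, k) ≤ (e n / (M + 1))^{M+1}` traces on a shattered set of size `n`, so
`2^n ≤ (e d / M)^M / e · (e n / (M + 1))^{M+1}`, and taking logarithms forces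
`n ≤ 6 M log (e d / M)`. When `d = M` the Radon bound `n ≤ M + 1 ≤ 6 M` is already enough.
-/

open Set

/-- A class `F` of `Prop`-valued classifiers shatters a finite set `s` if every
subset of `s` can be picked out by some member of `F`. -/
def Shatters {α : Type*} (F : Set (α → Prop)) (s : Finset α) : Prop :=
  ∀ t ⊆ s, ∃ f ∈ F, ∀ x ∈ s, f x ↔ x ∈ t

theorem Shatters.mono {α : Type*} {F G : Set (α → Prop)} {s : Finset α} (hFG : F ⊆ G)
    (hF : Shatters F s) : Shatters G s := fun t ht =>
  let ⟨f, hf, hft⟩ := hF t ht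
  ⟨f, hFG hf, hft⟩

open Module in
theorem card_le_finrank_add_one_of_forall_exists_halfSpace {ι V : Type*} [Fintype ι]
    [AddCommGroup V] [Module ℝ V] [FiniteDimensional ℝ V] (p : ι → V)
    (h : ∀ t : Set ι, ∃ (φ : V →ₗ[ℝ] ℝ) (b : ℝ), ∀ i, 0 < φ (p i) + b ↔ i ∈ t) :
    Fintype.card ι ≤ finrank ℝ V + 1 := by
  by_contra hcard
  have hdep : ¬ AffineIndependent ℝ p := fun hp =>
    hcard (hp.card_le_finrank_succ.trans (by grw [Submodule.finrank_le]))
  obtain ⟨I, z, hzI, hzJ⟩ := Convex.radon_partition hdep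
  obtain ⟨φ, b, hφ⟩ := h I
  have hpos : convexHull ℝ (p '' I) ⊆ {x | -b < φ x} :=
    convexHull_min (image_subset_iff.2 fun i hi => show -b < φ (p i) by linarith [(hφ i).2 hi])
      (convex_halfSpace_gt φ.isLinear _)
  have hneg : convexHull ℝ (p '' Iᶜ) ⊆ {x | φ x ≤ -b} :=
    convexHull_min
      (image_subset_iff.2 fun i hi => show φ (p i) ≤ -b by linarith [not_lt.1 (mt (hφ i).1 hi)])
      (convex_halfSpace_le φ.isLinear _)
  have h1 : -b < φ z := hpos hzI
  have h2 : φ z ≤ -b := hneg hzJ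
  exact h2.not_gt h1

section Traces

variable {α : Type*}

open scoped Classical in
noncomputable def traces (F : Set (α → Prop)) (s : Finset α) : Finset (Finset s) :=
  Finset.univ.filter fun t => ∃ f ∈ F, ∀ x : s, f x ↔ x ∈ t

theorem mem_traces {F : Set (α → Prop)} {s : Finset α} {t : Finset s} :
    t ∈ traces F s ↔ ∃ f ∈ F, ∀ x : s, f x ↔ x ∈ t := by
  simp [traces]

theorem shatters_map_subtype_of_shatters_traces [DecidableEq α] {F : Set (α → Prop)}
    {s : Finset α} {u : Finset s} (hu : (traces F s).Shatters u) :
    Shatters F (u.map (Function.Embedding.subtype _)) := by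
  intro t _
  obtain ⟨a, ha, hua⟩ := hu (Finset.filter_subset (fun y : s => y.1 ∈ t) u)
  obtain ⟨f, hf, hfa⟩ := mem_traces.1 ha
  refine ⟨f, hf, ?_⟩
  simp only [Finset.mem_map, Function.Embedding.coe_subtype, forall_exists_index, and_imp]
  rintro _ y hy rfl
  have := congrArg (y ∈ ·) hua
  simp only [Finset.mem_inter, Finset.mem_filter, hy, true_and, eq_iff_iff] at this
  rw [hfa, this]

theorem card_traces_le_sum_choose {F : Set (α → Prop)} {k : ℕ}
    (hF : ∀ u, Shatters F u → u.card ≤ k) (s : Finset α) :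
    (traces F s).card ≤ ∑ i ∈ Finset.Iic k, s.card.choose i := by
  classical
  have hvc : (traces F s).vcDim ≤ k := Finset.sup_le fun u hu => by
    simpa using hF _ (shatters_map_subtype_of_shatters_traces (Finset.mem_shatterer.1 hu))
  calc (traces F s).card ≤ (traces F s).shatterer.card := Finset.card_le_card_shatterer _
    _ ≤ ∑ i ∈ Finset.Iic (traces F s).vcDim, (Fintype.card s).choose i :=
      Finset.card_shatterer_le_sum_vcDim
    _ ≤ ∑ i ∈ Finset.Iic k, s.card.choose i := by
      rw [Fintype.card_coe]
      exact Finset.sum_le_sum_of_subset (Finset.Iic_subset_Iic.2 hvc)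

theorem two_pow_card_le_of_shatters {ι : Type*} {F : Set (α → Prop)} {G : ι → Set (α → Prop)}
    {J : Finset ι} (hFG : F ⊆ ⋃ j ∈ J, G j) {k : ℕ}
    (hG : ∀ j ∈ J, ∀ u, Shatters (G j) u → u.card ≤ k) {s : Finset α} (hs : Shatters F s) :
    2 ^ s.card ≤ J.card * ∑ i ∈ Finset.Iic k, s.card.choose i := by
  classical
  have hcover : (Finset.univ : Finset (Finset s)) ⊆ J.biUnion fun j => traces (G j) s := by
    intro t _
    obtain ⟨f, hf, hft⟩ :=
      hs (t.map (Function.Embedding.subtype _)) fun _ hx => t.property_of_mem_map_subtype hx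
    obtain ⟨j, hj, hfj⟩ := mem_iUnion₂.1 (hFG hf)
    exact Finset.mem_biUnion.2 ⟨j, hj, mem_traces.2 ⟨f, hfj, fun x => by simpa using hft x x.2⟩⟩
  calc 2 ^ s.card = (Finset.univ : Finset (Finset s)).card := by simp
    _ ≤ ∑ j ∈ J, (traces (G j) s).card := (Finset.card_le_card hcover).trans Finset.card_biUnion_le
    _ ≤ ∑ _j ∈ J, ∑ i ∈ Finset.Iic k, s.card.choose i :=
      Finset.sum_le_sum fun j hj => card_traces_le_sum_choose (hG j hj) s
    _ = J.card * ∑ i ∈ Finset.Iic k, s.card.choose i := by rw [Finset.sum_const, smul_eq_mul]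

end Traces

section HalfSpaces

def sparseHalfSpaces (ι : Type*) [Fintype ι] (M : ℕ) : Set ((ι → ℝ) → Prop) :=
  {f | ∃ (w : ι → ℝ) (b : ℝ), (∑ i, w i ^ 2) = 1 ∧ {i | w i ≠ 0}.ncard ≤ M ∧
    ∀ x, f x ↔ 0 < (∑ i, w i * x i) + b}

variable {ι : Type*} [Fintype ι]

def halfSpacesOn (S : Finset ι) : Set ((ι → ℝ) → Prop) :=
  {f | ∃ (φ : (S → ℝ) →ₗ[ℝ] ℝ) (b : ℝ), ∀ x, f x ↔ 0 < φ (fun i => x i) + b}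

theorem card_le_of_shatters_halfSpacesOn {S : Finset ι} {u : Finset (ι → ℝ)}
    (hu : Shatters (halfSpacesOn S) u) : u.card ≤ S.card + 1 := by
  classical
  have := card_le_finrank_add_one_of_forall_exists_halfSpace (fun (y : u) (i : S) => y.1 i)
    fun t => by
      obtain ⟨f, ⟨φ, b, hf⟩, hft⟩ :=
        hu ((Finset.univ.filter (· ∈ t)).map (Function.Embedding.subtype _))
          fun _ hx => Finset.property_of_mem_map_subtype _ hx
      exact ⟨φ, b, fun y => by simp [← hf, hft y.1 y.2]⟩
  simpa using this

theorem sparseHalfSpaces_subset_biUnion_halfSpacesOn {M : ℕ} (hM : M ≤ Fintype.card ι) :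
    sparseHalfSpaces ι M ⊆ ⋃ S ∈ Finset.univ.powersetCard M, halfSpacesOn S := by
  classical
  rintro f ⟨w, b, -, hw, hf⟩
  obtain ⟨S, hwS, -, hS⟩ := Finset.exists_subsuperset_card_eq (Finset.subset_univ
    (Finset.univ.filter (w · ≠ 0))) (by simpa [← Set.ncard_coe_finset] using hw) hM
  have hsum : ∀ x : ι → ℝ, ∑ i, w i * x i = ∑ i : S, w i * x i := fun x => by
    rw [Finset.sum_coe_sort S (fun i => w i * x i)]
    refine (Finset.sum_subset (Finset.subset_univ S) fun i _ hi => ?_).symm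
    simp [show w i = 0 by by_contra h; exact hi (hwS (by simpa using h))]
  refine mem_iUnion₂.2 ⟨S, Finset.mem_powersetCard_univ.2 hS, ∑ i : S, w i • LinearMap.proj i, b,
    fun x => by simp [hf, hsum]⟩

theorem card_le_card_add_one_of_shatters_sparseHalfSpaces {M : ℕ} {s : Finset (ι → ℝ)}
    (hs : Shatters (sparseHalfSpaces ι M) s) : s.card ≤ Fintype.card ι + 1 := by
  have hmono : sparseHalfSpaces ι M ⊆ sparseHalfSpaces ι (Fintype.card ι) :=
    fun _ ⟨w, b, hw, _, hf⟩ =>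
      ⟨w, b, hw, (Set.ncard_le_card _).trans_eq Nat.card_eq_fintype_card, hf⟩
  have hsub := sparseHalfSpaces_subset_biUnion_halfSpacesOn (ι := ι) le_rfl
  rw [show Finset.univ.powersetCard (Fintype.card ι) = {Finset.univ} from
    Finset.powersetCard_self _, Finset.set_biUnion_singleton] at hsub
  exact (card_le_of_shatters_halfSpacesOn (hs.mono (hmono.trans hsub))).trans_eq
    (by rw [Finset.card_univ])

theorem two_pow_card_le_of_shatters_sparseHalfSpaces {M : ℕ} (hM : M ≤ Fintype.card ι)
    {s : Finset (ι → ℝ)} (hs : Shatters (sparseHalfSpaces ι M) s) :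
    2 ^ s.card ≤ (Fintype.card ι).choose M * ∑ k ∈ Finset.Iic (M + 1), s.card.choose k := by
  refine (two_pow_card_le_of_shatters (sparseHalfSpaces_subset_biUnion_halfSpacesOn hM)
    (fun S hS u hu => (card_le_of_shatters_halfSpacesOn hu).trans_eq
      (by rw [Finset.mem_powersetCard_univ.1 hS])) hs).trans_eq ?_
  rw [Finset.card_powersetCard, Finset.card_univ]

theorem shatters_sparseHalfSpaces_image_single [DecidableEq ι] {T : Finset ι} (hT : T.Nonempty) :
    Shatters (sparseHalfSpaces ι T.card) (T.image fun i => Pi.single i 1) := by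
  intro t _
  set c : ℝ := (√T.card)⁻¹
  have hc : 0 < c := by positivity
  let w : ι → ℝ := fun i => if i ∈ T then (if Pi.single i 1 ∈ t then c else -c) else 0
  refine ⟨_, ⟨w, 0, ?_, ?_, fun x => Iff.rfl⟩, ?_⟩
  · have hc2 : T.card * c ^ 2 = 1 := by
      simp [c, inv_pow, Real.sq_sqrt, hT.card_pos.ne']
    simpa [w, apply_ite (· ^ 2), Finset.sum_ite_mem] using hc2
  · calc {i | w i ≠ 0}.ncard ≤ (T : Set ι).ncard :=
          Set.ncard_le_ncard (fun i hi => by by_contra h; simp_all [w]) (T.finite_toSet)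
      _ = T.card := Set.ncard_coe_finset T
  · simp only [Finset.mem_image, forall_exists_index, and_imp]
    rintro _ i hi rfl
    by_cases hit : Pi.single i 1 ∈ t <;> simp [w, Pi.single_apply, hi, hit, hc, hc.le]

theorem exists_shatters_sparseHalfSpaces_card_eq {M : ℕ} (hM : 1 ≤ M)
    (hMι : M ≤ Fintype.card ι) :
    ∃ s : Finset (ι → ℝ), Shatters (sparseHalfSpaces ι M) s ∧ s.card = M := by
  classical
  obtain ⟨T, -, hT⟩ := Finset.exists_subset_card_eq (s := Finset.univ) (by simpa using hMι)
  refine ⟨T.image fun i => Pi.single i 1,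
    hT ▸ shatters_sparseHalfSpaces_image_single (Finset.card_pos.1 (by omega)), ?_⟩
  rw [Finset.card_image_of_injective _ fun i j h => by simpa [Pi.single_apply] using congrFun h i,
    hT]

end HalfSpaces

section Estimates

open Real

theorem exp_one_mul_pow_le_factorial_mul_exp_one_pow {M : ℕ} (hM : 1 ≤ M) :
    exp 1 * (M : ℝ) ^ M ≤ M.factorial * exp 1 ^ M := by
  induction M, hM using Nat.le_induction with
  | base => simp
  | succ M hM ih =>
    have hstep : ((M : ℝ) + 1) ^ M ≤ (M : ℝ) ^ M * exp 1 := by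
      calc ((M : ℝ) + 1) ^ M = (M : ℝ) ^ M * (1 + (M : ℝ)⁻¹) ^ M := by
            rw [← mul_pow]; field_simp
        _ ≤ (M : ℝ) ^ M * exp 1 := by gcongr; exact one_add_inv_pow_le_exp
    calc exp 1 * ((M + 1 : ℕ) : ℝ) ^ (M + 1) = (M + 1) * (exp 1 * ((M : ℝ) + 1) ^ M) := by
          push_cast; ring
      _ ≤ (M + 1) * (exp 1 * ((M : ℝ) ^ M * exp 1)) := by gcongr
      _ = (M + 1) * (exp 1 * (M : ℝ) ^ M) * exp 1 := by ring
      _ ≤ (M + 1) * (M.factorial * exp 1 ^ M) * exp 1 := by gcongr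
      _ = (M + 1).factorial * exp 1 ^ (M + 1) := by push_cast [Nat.factorial_succ]; ring

theorem choose_le_exp_one_mul_div_pow_div_exp_one {d M : ℕ} (hM : 1 ≤ M) :
    (d.choose M : ℝ) ≤ (exp 1 * d / M) ^ M / exp 1 := by
  have hfact := exp_one_mul_pow_le_factorial_mul_exp_one_pow hM
  calc (d.choose M : ℝ) ≤ (d : ℝ) ^ M / M.factorial := Nat.choose_le_pow_div M d
    _ ≤ (exp 1 * d / M) ^ M / exp 1 := by
      rw [div_pow, mul_pow, div_div, div_le_div_iff₀ (by positivity) (by positivity)]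
      nlinarith [mul_le_mul_of_nonneg_left hfact (by positivity : (0 : ℝ) ≤ (d : ℝ) ^ M)]

theorem sum_choose_le_exp_one_mul_div_pow {n D : ℕ} (hD : 1 ≤ D) (hDn : D ≤ n) :
    (∑ k ∈ Finset.Iic D, n.choose k : ℝ) ≤ (exp 1 * n / D) ^ D := by
  have hD0 : (0 : ℝ) < D := by exact_mod_cast hD
  have hn0 : (0 : ℝ) < n := by exact_mod_cast hD.trans hDn
  set x : ℝ := D / n
  have hx0 : 0 < x := by positivity
  have hx1 : x ≤ 1 := div_le_one_of_le₀ (by exact_mod_cast hDn) hn0.le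
  -- weight the `k`-th term by `x ^ k ≥ x ^ D` and compare with the expansion of `(1 + x) ^ n`
  have hsum : (∑ k ∈ Finset.Iic D, (n.choose k : ℝ)) * x ^ D ≤ exp 1 ^ D :=
    calc (∑ k ∈ Finset.Iic D, (n.choose k : ℝ)) * x ^ D
        ≤ ∑ k ∈ Finset.Iic D, (n.choose k : ℝ) * x ^ k := by
          rw [Finset.sum_mul]
          exact Finset.sum_le_sum fun k hk =>
            mul_le_mul_of_nonneg_left (pow_le_pow_of_le_one hx0.le hx1 (Finset.mem_Iic.1 hk))
              (by positivity)
      _ ≤ ∑ k ∈ Finset.range (n + 1), (n.choose k : ℝ) * x ^ k :=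
          Finset.sum_le_sum_of_subset_of_nonneg
            (fun k hk => Finset.mem_range.2 (by have := Finset.mem_Iic.1 hk; omega))
            (fun _ _ _ => by positivity)
      _ = (1 + x) ^ n := by rw [add_comm 1 x, add_pow]; simp only [one_pow, mul_one, mul_comm]
      _ ≤ exp x ^ n := by gcongr; linarith [add_one_le_exp x]
      _ = exp 1 ^ D := by rw [← exp_nat_mul, ← exp_nat_mul, mul_one, mul_div_cancel₀ _ hn0.ne']
  calc (∑ k ∈ Finset.Iic D, (n.choose k : ℝ)) ≤ exp 1 ^ D / x ^ D := by
        rwa [le_div_iff₀ (by positivity)]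
    _ = (exp 1 * n / D) ^ D := by rw [← div_pow, div_div_eq_mul_div]

theorem one_le_add_one_mul_log_add_one_div {m : ℝ} (hm : 0 < m) :
    1 ≤ (m + 1) * log ((m + 1) / m) := by
  have h := one_sub_inv_le_log_of_pos (show 0 < (m + 1) / m by positivity)
  rw [inv_div, show 1 - m / (m + 1) = 1 / (m + 1) by field_simp; ring,
    div_le_iff₀' (by linarith)] at h
  exact h

theorem mul_log_sub_mul_le_of_le {a c x y : ℝ} (ha : 0 ≤ a) (hx : 0 < x) (hxy : x ≤ y)
    (hac : a ≤ c * x) : a * log y - c * y ≤ a * log x - c * x := by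
  have hy : 0 < y := hx.trans_le hxy
  have hlog := log_le_sub_one_of_pos (div_pos hy hx)
  rw [log_div hy.ne' hx.ne', div_sub_one hx.ne'] at hlog
  have hslope : a * ((y - x) / x) ≤ c * (y - x) := by
    rw [mul_div_assoc', div_le_iff₀ hx]
    nlinarith [mul_le_mul_of_nonneg_left hac (sub_nonneg.2 hxy)]
  nlinarith [mul_le_mul_of_nonneg_left hlog ha]

theorem mul_sub_one_add_mul_log_six_mul_lt {m L : ℝ} (hm : 1 ≤ m)
    (hL : 1 + log ((m + 1) / m) ≤ L) :
    m * L - 1 + (m + 1) * log (exp 1 * (6 * m * L) / (m + 1)) < 6 * m * L * log 2 := by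
  have hm0 : 0 < m := by linarith
  have ht := one_le_add_one_mul_log_add_one_div hm0
  set t := log ((m + 1) / m) with ht_def
  have ht0 : 0 ≤ t := by nlinarith
  have ht2 : 1 ≤ 2 * m * t := by nlinarith
  have hL0 : 0 < L := by linarith
  have hlog2 := log_two_gt_d9
  have hlog3 := log_three_lt_d9
  have hlog : log (exp 1 * (6 * m * L) / (m + 1)) ≤ log 2 + log 3 + L - t := by
    rw [log_div (by positivity) (by positivity), log_mul (exp_pos 1).ne' (by positivity), log_exp,
      log_mul (by positivity) hL0.ne', log_mul (by norm_num) hm0.ne',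
      show (6 : ℝ) = 2 * 3 by norm_num, log_mul (by norm_num) (by norm_num), ht_def,
      log_div (by positivity) hm0.ne']
    linarith [log_le_sub_one_of_pos hL0]
  -- `L` enters with coefficient `6 m log 2 - 2 m - 1 > 0`, so `L = 1 + t` is the worst case
  linarith [mul_le_mul_of_nonneg_left hlog (show 0 ≤ m + 1 by linarith),
    mul_nonneg (show 0 ≤ 6 * m * log 2 - 2 * m - 1 by nlinarith) (show 0 ≤ L - 1 - t by linarith),
    mul_nonneg (show 0 ≤ 2 * m * t - 1 by linarith) (show 0 ≤ 6 * log 2 - 1 by linarith),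
    mul_nonneg (show 0 ≤ m - 1 by linarith) (show 0 ≤ 5 * log 2 - log 3 - 2 by linarith)]

theorem mul_sub_one_add_mul_log_lt_mul_log_two {m L n : ℝ} (hm : 1 ≤ m)
    (hL : 1 + log ((m + 1) / m) ≤ L) (hn : 6 * m * L ≤ n) :
    m * L - 1 + (m + 1) * log (exp 1 * n / (m + 1)) < n * log 2 := by
  have hL1 : 1 ≤ L :=
    le_trans (le_add_of_nonneg_right (log_nonneg ((le_div_iff₀ (by linarith)).2 (by linarith)))) hL
  have hn₀ : 0 < 6 * m * L := by positivity
  have hn0 : 0 < n := hn₀.trans_le hn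
  -- past `n₀ = 6 m L ≥ 3 (m + 1)`, the slope `(m + 1) / n` of `(m + 1) log n` stays below `log 2`
  have hmono := mul_log_sub_mul_le_of_le (show 0 ≤ m + 1 by linarith) hn₀ hn
    (show m + 1 ≤ log 2 * (6 * m * L) by nlinarith [log_two_gt_d9])
  have hcore := mul_sub_one_add_mul_log_six_mul_lt hm hL
  rw [log_div (by positivity) (by positivity), log_mul (exp_pos 1).ne' hn₀.ne'] at hcore
  rw [log_div (by positivity) (by positivity), log_mul (exp_pos 1).ne' hn0.ne']
  linarith

theorem le_six_mul_log_of_two_pow_le {d M n : ℕ} (hM : 1 ≤ M) (hMd : M < d)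
    (h : 2 ^ n ≤ d.choose M * ∑ k ∈ Finset.Iic (M + 1), n.choose k) :
    (n : ℝ) ≤ 6 * M * log (exp 1 * d / M) := by
  have hM0 : (0 : ℝ) < M := by exact_mod_cast hM
  have hd0 : (0 : ℝ) < d := by exact_mod_cast Nat.zero_lt_of_lt hMd
  set L := log (exp 1 * d / M) with hL_def
  have hL : 1 + log ((M + 1) / M) ≤ L := by
    rw [hL_def, mul_div_assoc, log_mul (exp_pos 1).ne' (by positivity), log_exp]
    gcongr
    exact_mod_cast hMd
  by_contra! hn
  have hL1 : 1 ≤ L := le_trans (le_add_of_nonneg_right (log_nonneg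
    ((le_div_iff₀ hM0).2 (by linarith)))) hL
  have hMn : M + 1 ≤ n := by
    have : (M : ℝ) + 1 < n := by
      linarith [mul_le_mul_of_nonneg_left hL1 hM0.le, (Nat.one_le_cast (α := ℝ)).2 hM]
    exact_mod_cast this.le
  have hn0 : (0 : ℝ) < n := by exact_mod_cast Nat.zero_lt_of_lt hMn
  have hcount : (2 : ℝ) ^ n ≤ (exp 1 * d / M) ^ M / exp 1 * (exp 1 * n / (M + 1)) ^ (M + 1) :=
    calc (2 : ℝ) ^ n ≤ d.choose M * ∑ k ∈ Finset.Iic (M + 1), (n.choose k : ℝ) := by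
          exact_mod_cast h
      _ ≤ (exp 1 * d / M) ^ M / exp 1 * (exp 1 * n / (M + 1)) ^ (M + 1) := by
          gcongr
          · exact choose_le_exp_one_mul_div_pow_div_exp_one hM
          · exact_mod_cast sum_choose_le_exp_one_mul_div_pow (Nat.le_add_left 1 M) hMn
  have hlog := log_le_log (by positivity) hcount
  rw [log_pow, log_mul (by positivity) (by positivity), log_div (by positivity) (exp_pos 1).ne',
    log_pow, log_pow, log_exp, ← hL_def] at hlog
  have := mul_sub_one_add_mul_log_lt_mul_log_two (by exact_mod_cast hM) hL hn.le
  push_cast at hlog this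
  linarith

end Estimates

/-- VC dimension of the class `F_M = { x ↦ 1_{⟨w,x⟩ + b > 0} : ‖w‖₂ = 1, ‖w‖₀ ≤ M, b ∈ ℝ }`:
some set of size `M` is shattered, and every shattered set has size at most
`6 M log(e d / M)`. -/
theorem stmt5 (d M : ℕ) (hM1 : 1 ≤ M) (hMd : M ≤ d) :
    (∃ s : Finset (Fin d → ℝ),
      Shatters { f : (Fin d → ℝ) → Prop | ∃ (w : Fin d → ℝ) (b : ℝ),
          (∑ i, (w i) ^ 2) = 1 ∧ {i | w i ≠ 0}.ncard ≤ M ∧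
          ∀ x, f x ↔ 0 < (∑ i, w i * x i) + b } s ∧ s.card = M) ∧
    (∀ s : Finset (Fin d → ℝ),
      Shatters { f : (Fin d → ℝ) → Prop | ∃ (w : Fin d → ℝ) (b : ℝ),
          (∑ i, (w i) ^ 2) = 1 ∧ {i | w i ≠ 0}.ncard ≤ M ∧
          ∀ x, f x ↔ 0 < (∑ i, w i * x i) + b } s →
      (s.card : ℝ) ≤ 6 * M * Real.log (Real.exp 1 * d / M)) := by
  refine ⟨exists_shatters_sparseHalfSpaces_card_eq hM1 (by simpa using hMd), fun s hs => ?_⟩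
  obtain rfl | hMd := hMd.eq_or_lt
  · have hcard : (s.card : ℝ) ≤ M + 1 := by
      exact_mod_cast (card_le_card_add_one_of_shatters_sparseHalfSpaces hs).trans_eq (by simp)
    have hM : (1 : ℝ) ≤ M := by exact_mod_cast hM1
    rw [mul_div_cancel_right₀ _ (by positivity), Real.log_exp]
    linarith
  · exact le_six_mul_log_of_two_pow_le hM1 hMd
      (by simpa using two_pow_card_le_of_shatters_sparseHalfSpaces (by simpa using hMd.le) hs)
end

section
/- Let φ(t) = max(t,0) be ReLU and define its Hermite coefficients c_k(b) by φ(t + b) = Σ_{k≥0} (c_k(b)/k!) H_{e_k}(t) under the standard Gaussian measure, where H_{e_k} is the k-th probabilists' Hermite polynomial. Then c₁(b) = 1 − Φ(−b), and for every k ≥ 2, c_k(b) = (e^{−b²/2}/√(2π)) · H_{e_{k−2}}(−b), where Φ is the standard normal CDF. -/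
open MeasureTheory ProbabilityTheory Polynomial Real Set Filter

/-!
Let `g` be the standard Gaussian density, so `(p g)' = (p' - X p) g` for a polynomial `p`, and
`p g` vanishes at `+∞`. Since `He_{n+1} = X He_n - He_n'`, this gives `(He_n g)' = -He_{n+1} g`
and `((X + b) He_n g)' = He_n g - (X + b) He_{n+1} g`. Integrating over `(-b, ∞)`, the half-line
where the ReLU `φ(z + b)` is nonzero, yields `c_{n+1}(b) = ∫_{-b}^∞ He_n g`, which is
`P(Z > -b)` for `n = 0` and `He_{n-1}(-b) g(-b)` for `n ≥ 1`.
-/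

lemma gaussianPDFReal_zero_one (x : ℝ) :
    gaussianPDFReal 0 1 x = (√(2 * π))⁻¹ * rexp (-(1 / 2) * x ^ 2) := by
  simp [gaussianPDFReal, div_eq_inv_mul]

lemma hasDerivAt_gaussianPDFReal_zero_one (x : ℝ) :
    HasDerivAt (gaussianPDFReal 0 1) (-x * gaussianPDFReal 0 1 x) x := by
  have hexp := (((hasDerivAt_pow 2 x).const_mul (-(1 / 2) : ℝ)).exp).const_mul (√(2 * π))⁻¹
  rw [funext gaussianPDFReal_zero_one]
  exact hexp.congr_deriv (by ring)

lemma integrable_eval_mul_gaussianPDFReal (p : ℝ[X]) :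
    Integrable fun x => p.eval x * gaussianPDFReal 0 1 x := by
  induction p using Polynomial.induction_on' with
  | add p q hp hq => exact (hp.add hq).congr (ae_of_all _ fun x => by simp [add_mul])
  | monomial n a =>
    have h := integrable_rpow_mul_exp_neg_mul_sq (b := 1 / 2) (s := n) (by norm_num)
      (by linarith [n.cast_nonneg (α := ℝ)])
    refine (h.const_mul (a * (√(2 * π))⁻¹)).congr (ae_of_all _ fun x => ?_)
    simp only [eval_monomial, gaussianPDFReal_zero_one, rpow_natCast]
    ring

lemma integral_Ioi_eval_derivative_sub_X_mul_mul_gaussianPDFReal (p : ℝ[X]) (a : ℝ) :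
    ∫ x in Ioi a, (derivative p - X * p).eval x * gaussianPDFReal 0 1 x
      = -(p.eval a * gaussianPDFReal 0 1 a) := by
  have hderiv (x : ℝ) : HasDerivAt (fun x => p.eval x * gaussianPDFReal 0 1 x)
      ((derivative p - X * p).eval x * gaussianPDFReal 0 1 x) x := by
    refine ((p.hasDerivAt x).mul (hasDerivAt_gaussianPDFReal_zero_one x)).congr_deriv ?_
    simp only [eval_sub, eval_mul, eval_X]
    ring
  have hint : IntegrableOn _ (Ioi a) :=
    (integrable_eval_mul_gaussianPDFReal (derivative p - X * p)).integrableOn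
  have hlim := tendsto_zero_of_hasDerivAt_of_integrableOn_Ioi (fun x _ => hderiv x) hint
    (integrable_eval_mul_gaussianPDFReal p).integrableOn
  rw [integral_Ioi_of_hasDerivAt_of_tendsto (hderiv a).continuousAt.continuousWithinAt
    (fun x _ => hderiv x) hint hlim, zero_sub]

lemma derivative_sub_X_mul_map_hermite (n : ℕ) :
    derivative ((hermite n).map (algebraMap ℤ ℝ)) - X * (hermite n).map (algebraMap ℤ ℝ)
      = -(hermite (n + 1)).map (algebraMap ℤ ℝ) := by
  rw [hermite_succ, Polynomial.map_sub, Polynomial.map_mul, Polynomial.map_X, derivative_map]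
  ring

lemma integral_Ioi_hermite_succ_mul_gaussianPDFReal (n : ℕ) (a : ℝ) :
    ∫ x in Ioi a, aeval x (hermite (n + 1)) * gaussianPDFReal 0 1 x
      = aeval a (hermite n) * gaussianPDFReal 0 1 a := by
  have h := integral_Ioi_eval_derivative_sub_X_mul_mul_gaussianPDFReal
    ((hermite n).map (algebraMap ℤ ℝ)) a
  simpa only [derivative_sub_X_mul_map_hermite, eval_neg, eval_map_algebraMap, neg_mul,
    integral_neg, neg_inj] using h

lemma integral_Ioi_add_mul_hermite_succ_mul_gaussianPDFReal (n : ℕ) (b : ℝ) :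
    ∫ x in Ioi (-b), (x + b) * aeval x (hermite (n + 1)) * gaussianPDFReal 0 1 x
      = ∫ x in Ioi (-b), aeval x (hermite n) * gaussianPDFReal 0 1 x := by
  set He : ℕ → ℝ[X] := fun k => (hermite k).map (algebraMap ℤ ℝ)
  have hpoly : derivative ((X + C b) * He n) - X * ((X + C b) * He n)
      = He n - (X + C b) * He (n + 1) := by
    rw [derivative_mul, derivative_X_add_C]
    linear_combination (X + C b) * derivative_sub_X_mul_map_hermite n
  have h := integral_Ioi_eval_derivative_sub_X_mul_mul_gaussianPDFReal ((X + C b) * He n) (-b)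
  rw [hpoly] at h
  simp only [eval_sub, sub_mul] at h
  rw [integral_sub (integrable_eval_mul_gaussianPDFReal _).integrableOn
    (integrable_eval_mul_gaussianPDFReal _).integrableOn] at h
  simp only [eval_mul, eval_add, eval_X, eval_C, neg_add_cancel, zero_mul, neg_zero,
    sub_eq_zero] at h
  simpa only [He, eval_map_algebraMap, mul_assoc] using h.symm

lemma integral_gaussianReal_max_add_zero_mul (b : ℝ) (f : ℝ → ℝ) :
    ∫ z, max (z + b) 0 * f z ∂(gaussianReal 0 1)
      = ∫ z in Ioi (-b), (z + b) * f z * gaussianPDFReal 0 1 z := by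
  rw [integral_gaussianReal_eq_integral_smul one_ne_zero, ← integral_indicator measurableSet_Ioi]
  congr 1 with z
  by_cases hz : z ∈ Ioi (-b)
  · rw [indicator_of_mem hz, max_eq_left (by linarith [mem_Ioi.mp hz]), smul_eq_mul]; ring
  · rw [indicator_of_notMem hz, max_eq_right (by linarith [not_lt.mp (mem_Ioi.not.mp hz)]),
      zero_mul, smul_zero]

lemma gaussianReal_real_eq_setIntegral (μ : ℝ) {v : NNReal} (hv : v ≠ 0) (s : Set ℝ) :
    (gaussianReal μ v).real s = ∫ x in s, gaussianPDFReal μ v x := by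
  rw [measureReal_def, gaussianReal_apply_eq_integral μ hv,
    ENNReal.toReal_ofReal (integral_nonneg fun x => gaussianPDFReal_nonneg μ v x)]

/-- Hermite coefficients `c_k(b) = E[φ(Z+b) H_{e_k}(Z)]` of the shifted ReLU:
`c₁(b) = 1 − Φ(−b)` and, for `k ≥ 2`, `c_k(b) = (e^{−b²/2}/√(2π)) H_{e_{k−2}}(−b)`. -/
theorem stmt17 (b : ℝ) :
    (∫ z, max (z + b) 0 * (Polynomial.aeval z (Polynomial.hermite 1) : ℝ)
        ∂(gaussianReal 0 1))
      = 1 - ((gaussianReal 0 1) (Set.Iic (-b))).toReal ∧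
    ∀ k : ℕ, 2 ≤ k →
      (∫ z, max (z + b) 0 * (Polynomial.aeval z (Polynomial.hermite k) : ℝ)
          ∂(gaussianReal 0 1))
        = Real.exp (-b ^ 2 / 2) / Real.sqrt (2 * Real.pi) *
            (Polynomial.aeval (-b) (Polynomial.hermite (k - 2)) : ℝ) := by
  refine ⟨?_, fun k hk => ?_⟩
  · rw [integral_gaussianReal_max_add_zero_mul,
      integral_Ioi_add_mul_hermite_succ_mul_gaussianPDFReal 0 b, ← measureReal_def,
      ← probReal_compl_eq_one_sub measurableSet_Iic, compl_Iic,
      gaussianReal_real_eq_setIntegral 0 one_ne_zero]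
    simp
  · obtain ⟨m, rfl⟩ := Nat.exists_eq_add_of_le' hk
    rw [integral_gaussianReal_max_add_zero_mul,
      integral_Ioi_add_mul_hermite_succ_mul_gaussianPDFReal,
      integral_Ioi_hermite_succ_mul_gaussianPDFReal, gaussianPDFReal_zero_one, Nat.add_sub_cancel]
    ring_nf
end

section
/- Let V ∈ ℝ^{d×r} be a matrix with orthonormal columns (V^T V = I_r), let T_k : (ℝ^r)^{⊗k} → ℝ be a symmetric k-tensor, and let H^{(r)}_{e_k} and H^{(d)}_{e_k} denote the degree-k Hermite tensors on ℝ^r and ℝ^d respectively. Define T̃_k on (ℝ^d)^{⊗k} by T̃_k[e_{i₁},…,e_{i_k}] = T_k[V^T e_{i₁},…,V^T e_{i_k}]. Then for every x ∈ ℝ^d, ⟨T_k, H^{(r)}_{e_k}(V^T x)⟩ = ⟨T̃_k, H^{(d)}_{e_k}(x)⟩. -/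
open Finset Matrix

/-- The entries of the degree-`k` Hermite tensor on `ℝ^n`:
`H_{e_k}(x)|_{i₁,…,i_k} = e^{‖x‖²/2} (−1)^k ∂^k/(∂x_{i₁}⋯∂x_{i_k}) e^{−‖x‖²/2}`. -/
noncomputable def hermiteTensor (n k : ℕ) (x : Fin n → ℝ) (i : Fin k → Fin n) : ℝ :=
  Real.exp ((∑ c, (x c) ^ 2) / 2) * (-1 : ℝ) ^ k *
    iteratedFDeriv ℝ k (fun y : Fin n → ℝ => Real.exp (-(∑ c, (y c) ^ 2) / 2)) x
      (fun l => Pi.single (i l) 1)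

/-!
Write `g_n(y) = e^{-‖y‖²/2}`. Since `VᵀV = 1`, completing the square gives
`g_d(x + Vt) = e^{-(‖x‖² - ‖Vᵀx‖²)/2} · g_r(Vᵀx + t)` for all `t ∈ ℝ^r`. Differentiating `k` times
in `t` at `t = 0` yields
`D^k g_d(x)[Ve_{i₁}, …, Ve_{i_k}] = e^{-(‖x‖² - ‖Vᵀx‖²)/2} D^k g_r(Vᵀx)[e_{i₁}, …, e_{i_k}]`,
and expanding `Ve_i = ∑_j V_{j i} e_j` by multilinearity turns this into
`H^{(r)}(Vᵀx)_i = ∑_j (∏_l V_{j_l i_l}) H^{(d)}(x)_j`. Contracting with `T` and exchanging the two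
sums gives the theorem.
-/

section ShiftedLinearChange

variable {𝕜 E F G : Type*} [NontriviallyNormedField 𝕜] [NormedAddCommGroup E] [NormedSpace 𝕜 E]
  [NormedAddCommGroup F] [NormedSpace 𝕜 F] [NormedAddCommGroup G] [NormedSpace 𝕜 G]

theorem iteratedFDeriv_apply_map_eq_smul_of_comp_add_eq {n : WithTop ℕ∞} {f : E → F} {g : G → F}
    (hf : ContDiff 𝕜 n f) (hg : ContDiff 𝕜 n g) {k : ℕ} (hk : k ≤ n) (L : G →L[𝕜] E)
    {x : E} {y : G} {c : 𝕜} (h : ∀ t, f (x + L t) = c • g (y + t)) (u : Fin k → G) :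
    iteratedFDeriv 𝕜 k f x (fun l => L (u l)) = c • iteratedFDeriv 𝕜 k g y u := by
  have hf' : ContDiff 𝕜 n (fun z => f (x + z)) := hf.comp (contDiff_const.add contDiff_id)
  have hg' : ContDiff 𝕜 n (fun t => g (y + t)) := hg.comp (contDiff_const.add contDiff_id)
  have key : iteratedFDeriv 𝕜 k ((fun z => f (x + z)) ∘ L) 0 u =
      iteratedFDeriv 𝕜 k (fun t => c • g (y + t)) 0 u := by
    rw [show (fun z => f (x + z)) ∘ L = _ from funext h]
  rw [L.iteratedFDeriv_comp_right hf' 0 hk,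
    iteratedFDeriv_const_smul_apply' (hg'.of_le hk).contDiffAt,
    iteratedFDeriv_comp_add_left, iteratedFDeriv_comp_add_left] at key
  simpa using key

end ShiftedLinearChange

theorem MultilinearMap.apply_mulVec_single {R ι m n M : Type*} [CommSemiring R] [Fintype ι]
    [DecidableEq ι] [Fintype m] [DecidableEq m] [Fintype n] [DecidableEq n] [AddCommMonoid M]
    [Module R M] (W : MultilinearMap R (fun _ : ι => m → R) M) (V : Matrix m n R) (i : ι → n) :
    W (fun l => V *ᵥ Pi.single (i l) 1) =
      ∑ j : ι → m, (∏ l, V (j l) (i l)) • W (fun l => Pi.single (j l) 1) := by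
  have hcol : ∀ l, V *ᵥ Pi.single (i l) 1 = ∑ a, V a (i l) • (Pi.single a 1 : m → R) := by
    intro l
    ext a
    simp [Pi.single_apply]
  simp_rw [hcol, W.map_sum, W.map_smul_univ]

noncomputable def gaussian (ι : Type*) [Fintype ι] (y : ι → ℝ) : ℝ :=
  Real.exp (-(∑ c, y c ^ 2) / 2)

theorem contDiff_gaussian (ι : Type*) [Fintype ι] {n : WithTop ℕ∞} :
    ContDiff ℝ n (gaussian ι) := by
  unfold gaussian
  fun_prop

theorem sum_sq_eq_dotProduct {ι : Type*} [Fintype ι] (y : ι → ℝ) : ∑ c, y c ^ 2 = y ⬝ᵥ y := by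
  simp only [dotProduct, sq]

section Isometry

variable {m n : Type*} [Fintype m] [Fintype n] [DecidableEq n] {V : Matrix m n ℝ}

theorem dotProduct_self_add_mulVec (hV : Vᵀ * V = 1) (x : m → ℝ) (t : n → ℝ) :
    (x + V *ᵥ t) ⬝ᵥ (x + V *ᵥ t) = x ⬝ᵥ x + 2 * (Vᵀ *ᵥ x ⬝ᵥ t) + t ⬝ᵥ t := by
  have hnorm : V *ᵥ t ⬝ᵥ V *ᵥ t = t ⬝ᵥ t := by
    rw [dotProduct_mulVec, ← mulVec_transpose, mulVec_mulVec, hV, one_mulVec]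
  have hcross : x ⬝ᵥ V *ᵥ t = Vᵀ *ᵥ x ⬝ᵥ t := by
    rw [dotProduct_mulVec, ← mulVec_transpose]
  rw [add_dotProduct, dotProduct_add, dotProduct_add, hnorm, hcross, dotProduct_comm (V *ᵥ t),
    hcross]
  ring

theorem gaussian_add_mulVec (hV : Vᵀ * V = 1) (x : m → ℝ) (t : n → ℝ) :
    gaussian m (x + V *ᵥ t) =
      Real.exp (-(x ⬝ᵥ x - Vᵀ *ᵥ x ⬝ᵥ Vᵀ *ᵥ x) / 2) * gaussian n (Vᵀ *ᵥ x + t) := by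
  have hsplit := dotProduct_self_add_mulVec hV x t
  have hsplit' : (Vᵀ *ᵥ x + t) ⬝ᵥ (Vᵀ *ᵥ x + t) =
      Vᵀ *ᵥ x ⬝ᵥ Vᵀ *ᵥ x + 2 * (Vᵀ *ᵥ x ⬝ᵥ t) + t ⬝ᵥ t := by
    rw [add_dotProduct, dotProduct_add, dotProduct_add, dotProduct_comm t]
    ring
  simp only [gaussian, sum_sq_eq_dotProduct, hsplit, hsplit', ← Real.exp_add]
  ring_nf

end Isometry

theorem hermiteTensor_eq_gaussian (n k : ℕ) (x : Fin n → ℝ) (i : Fin k → Fin n) :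
    hermiteTensor n k x i = Real.exp (x ⬝ᵥ x / 2) * (-1 : ℝ) ^ k *
      iteratedFDeriv ℝ k (gaussian (Fin n)) x (fun l => Pi.single (i l) 1) := by
  rw [hermiteTensor, sum_sq_eq_dotProduct]
  rfl

theorem hermiteTensor_transpose_mulVec {d r k : ℕ} {V : Matrix (Fin d) (Fin r) ℝ}
    (hV : Vᵀ * V = 1) (x : Fin d → ℝ) (i : Fin k → Fin r) :
    hermiteTensor r k (Vᵀ *ᵥ x) i =
      ∑ j : Fin k → Fin d, (∏ l, V (j l) (i l)) * hermiteTensor d k x j := by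
  set y := Vᵀ *ᵥ x
  set D := iteratedFDeriv ℝ k (gaussian (Fin d)) x
  have hderiv : D (fun l => V *ᵥ Pi.single (i l) 1) = Real.exp (-(x ⬝ᵥ x - y ⬝ᵥ y) / 2) *
      iteratedFDeriv ℝ k (gaussian (Fin r)) y (fun l => Pi.single (i l) 1) :=
    iteratedFDeriv_apply_map_eq_smul_of_comp_add_eq (contDiff_gaussian (Fin d))
      (contDiff_gaussian (Fin r)) le_rfl (Matrix.toLin' V).toContinuousLinearMap
      (gaussian_add_mulVec hV x) _
  have hexp : Real.exp (y ⬝ᵥ y / 2) =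
      Real.exp (x ⬝ᵥ x / 2) * Real.exp (-(x ⬝ᵥ x - y ⬝ᵥ y) / 2) := by
    rw [← Real.exp_add]
    ring_nf
  calc hermiteTensor r k y i
      = Real.exp (x ⬝ᵥ x / 2) * (-1 : ℝ) ^ k * D (fun l => V *ᵥ Pi.single (i l) 1) := by
        rw [hermiteTensor_eq_gaussian, hderiv, hexp]
        ring
    _ = ∑ j : Fin k → Fin d, (∏ l, V (j l) (i l)) * hermiteTensor d k x j := by
        rw [← D.coe_coe, D.toMultilinearMap.apply_mulVec_single, mul_sum]
        simp only [hermiteTensor_eq_gaussian, smul_eq_mul, ContinuousMultilinearMap.coe_coe]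
        exact sum_congr rfl fun j _ => by ring

theorem stmt18_general (d r k : ℕ) (V : Matrix (Fin d) (Fin r) ℝ) (hV : Vᵀ * V = 1)
    (T : (Fin k → Fin r) → ℝ)
    (x : Fin d → ℝ) :
    ∑ i : Fin k → Fin r, T i * hermiteTensor r k (Vᵀ.mulVec x) i =
      ∑ j : Fin k → Fin d,
        (∑ i : Fin k → Fin r, T i * ∏ l, V (j l) (i l)) * hermiteTensor d k x j := by
  simp_rw [hermiteTensor_transpose_mulVec hV, mul_sum, sum_mul]
  rw [sum_comm]
  exact sum_congr rfl fun j _ => sum_congr rfl fun i _ => by ring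

/-- For an orthonormal `V ∈ ℝ^{d×r}` and a symmetric `k`-tensor `T` on `ℝ^r`, with
`T̃(j) = T(Vᵀ e_{j₁}, …, Vᵀ e_{j_k})`, one has
`⟨T, H^{(r)}_{e_k}(Vᵀ x)⟩ = ⟨T̃, H^{(d)}_{e_k}(x)⟩` for all `x`. -/
theorem stmt18 (d r k : ℕ) (V : Matrix (Fin d) (Fin r) ℝ) (hV : Vᵀ * V = 1)
    (T : (Fin k → Fin r) → ℝ)
    (hsym : ∀ (τ : Equiv.Perm (Fin k)) (i : Fin k → Fin r), T (i ∘ τ) = T i)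
    (x : Fin d → ℝ) :
    ∑ i : Fin k → Fin r, T i * hermiteTensor r k (Vᵀ.mulVec x) i =
      ∑ j : Fin k → Fin d,
        (∑ i : Fin k → Fin r, T i * ∏ l, V (j l) (i l)) * hermiteTensor d k x j :=
  stmt18_general d r k V hV T x
end
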